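/- A d×d unitary V satisfies VρV* ∈ ℳ_F for every free density matrix ρ ∈ ℳ_F if and only if V is a free unitary (i.e., V maps every free pure state to a free pure state). -/

import Mathlib

open Matrix Complex
open scoped ComplexOrder

noncomputable section

/-- Time-evolution unitary `U(t) = exp(-i t H)`. -/
def Uevol {d : ℕ} (H : Matrix (Fin d) (Fin d) ℂ) (t : ℝ) : Matrix (Fin d) (Fin d) ℂ :=
  NormedSpace.exp ((-(Complex.I * (t : ℂ))) • H)

/-- Revival fidelity `F_R(ψ) = |⟨ψ, U(2πT)ψ⟩|`. -/
def FR {d : ℕ} (H : Matrix (Fin d) (Fin d) ℂ) (T : ℕ) (x : Fin d → ℂ) : ℝ :=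
  ‖star x ⬝ᵥ (Uevol H (2 * Real.pi * T) *ᵥ x)‖

/-- A free pure state: a unit vector with perfect revival. -/
def IsFreeState {d : ℕ} (H : Matrix (Fin d) (Fin d) ℂ) (T : ℕ) (x : Fin d → ℂ) : Prop :=
  star x ⬝ᵥ x = 1 ∧ FR H T x = 1

/-- A free unitary: a unitary matrix mapping every free pure state to a free pure state. -/
def IsFreeUnitary {d : ℕ} (H : Matrix (Fin d) (Fin d) ℂ) (T : ℕ)
    (V : Matrix (Fin d) (Fin d) ℂ) : Prop :=
  V ∈ Matrix.unitaryGroup (Fin d) ℂ ∧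
    ∀ x : Fin d → ℂ, IsFreeState H T x → IsFreeState H T (V *ᵥ x)

open Classical in
/-- Positive semidefinite square root (junk value `0` off the PSD cone). -/
def psdSqrt {d : ℕ} (M : Matrix (Fin d) (Fin d) ℂ) : Matrix (Fin d) (Fin d) ℂ :=
  if h : M.PosSemidef then (h.1.eigenvectorUnitary : Matrix (Fin d) (Fin d) ℂ) *
    diagonal ((↑) ∘ Real.sqrt ∘ h.1.eigenvalues) *
    (star h.1.eigenvectorUnitary : Matrix (Fin d) (Fin d) ℂ) else 0

/-- Mixed-state revival fidelity `F_{R,M}(ρ) = tr √(√ρ · U(2πT) ρ U(2πT)* · √ρ)`. -/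
def FRM {d : ℕ} (H : Matrix (Fin d) (Fin d) ℂ) (T : ℕ) (ρ : Matrix (Fin d) (Fin d) ℂ) : ℂ :=
  (psdSqrt (psdSqrt ρ *
    (Uevol H (2 * Real.pi * T) * ρ * (Uevol H (2 * Real.pi * T))ᴴ) * psdSqrt ρ)).trace

/-- A free density matrix: a density matrix with mixed-state revival fidelity one. -/
def IsFreeDM {d : ℕ} (H : Matrix (Fin d) (Fin d) ℂ) (T : ℕ)
    (ρ : Matrix (Fin d) (Fin d) ℂ) : Prop :=
  ρ.PosSemidef ∧ ρ.trace = 1 ∧ FRM H T ρ = 1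


/-! Write `U = U(2πT)`, a unitary. A unit vector is free iff it is an eigenvector of `U`
(equality in Cauchy–Schwarz), and a density matrix `ρ` is free iff it commutes with `U`: the
fidelity between `ρ` and `σ = UρU*` is `tr |C|` for `C = √ρ U* √ρ`, and writing `C = W |C|`
(polar decomposition) turns `tr |C| = 1` into equality in the Cauchy–Schwarz inequality
`|tr ((√ρ W)* U* √ρ)| ≤ ‖√ρ W‖₂ ‖U* √ρ‖₂ = 1`, whence `√ρ W = U* √ρ` and `σ = ρ`.

For a pure state `xx*` both notions say that `x` is an eigenvector of `U`, which gives one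
direction. Conversely a free unitary `V` maps eigenvectors of `U` to eigenvectors of `U`, so in an
orthonormal eigenbasis of `U` the matrix `V* U V` is diagonal with entries that only depend on the
eigenvalue of `U`; a matrix commuting with `U` is block diagonal along the eigenspaces of `U` and
therefore also commutes with `V* U V`. -/

open scoped InnerProductSpace

theorem LinearMap.exists_linearIsometryEquiv_apply_eq_of_norm_eq
    {𝕜 E : Type*} [RCLike 𝕜] [NormedAddCommGroup E] [InnerProductSpace 𝕜 E]
    [FiniteDimensional 𝕜 E] {f g : E →ₗ[𝕜] E} (h : ∀ x, ‖g x‖ = ‖f x‖) :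
    ∃ e : E ≃ₗᵢ[𝕜] E, ∀ x, e (f x) = g x := by
  have hker : LinearMap.ker f ≤ LinearMap.ker g := fun x hx => by
    simpa [← norm_eq_zero, h] using hx
  let L : LinearMap.range f →ₗ[𝕜] E :=
    ((LinearMap.ker f).liftQ g hker).comp (f.quotKerEquivRange.symm : _ →ₗ[𝕜] _)
  have hL (x : E) : L ⟨f x, LinearMap.mem_range_self f x⟩ = g x := by
    simp only [L, LinearMap.comp_apply, LinearEquiv.coe_coe,
      LinearMap.quotKerEquivRange_symm_apply_image]
    rfl
  let φ : E →ₗᵢ[𝕜] E := LinearIsometry.extend ⟨L, by rintro ⟨-, x, rfl⟩; rw [hL]; exact h x⟩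
  exact ⟨φ.toLinearIsometryEquiv rfl, fun x =>
    (LinearIsometry.extend_apply _ ⟨f x, LinearMap.mem_range_self f x⟩).trans (hL x)⟩

theorem Unitary.commute_star_mul_mul_iff {R : Type*} [Semiring R] [StarMul R] {u : R}
    (hu : u ∈ unitary R) {a b : R} :
    Commute (star u * a * u) (star u * b * u) ↔ Commute a b := by
  simpa using commute_map_iff (f := Unitary.conjStarAlgAut ℕ R ⟨star u, Unitary.star_mem hu⟩)
    (EquivLike.injective _)

namespace Matrix

variable {n : Type*} [Fintype n] [DecidableEq n]

-- A form of the polar decomposition.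
theorem exists_mem_unitaryGroup_eq_mul_of_conjTranspose_mul_self_eq {C S : Matrix n n ℂ}
    (h : Cᴴ * C = Sᴴ * S) : ∃ W ∈ unitaryGroup n ℂ, C = W * S := by
  let Φ : Matrix n n ℂ ≃⋆ₐ[ℂ] (EuclideanSpace ℂ n →L[ℂ] EuclideanSpace ℂ n) := toEuclideanCLM
  have hnorm (x : EuclideanSpace ℂ n) : ‖Φ C x‖ = ‖Φ S x‖ := by
    have h' : star (Φ C) * Φ C = star (Φ S) * Φ S := by
      simpa only [← star_eq_conjTranspose, map_mul, map_star] using congrArg Φ h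
    rw [← sq_eq_sq₀ (norm_nonneg _) (norm_nonneg _),
      ContinuousLinearMap.apply_norm_sq_eq_inner_adjoint_left,
      ContinuousLinearMap.apply_norm_sq_eq_inner_adjoint_left]
    exact congrArg (fun A : EuclideanSpace ℂ n →L[ℂ] EuclideanSpace ℂ n => RCLike.re ⟪A x, x⟫_ℂ) h'
  clear_value Φ
  obtain ⟨e, he⟩ := LinearMap.exists_linearIsometryEquiv_apply_eq_of_norm_eq
    (f := (Φ S).toLinearMap) (g := (Φ C).toLinearMap) hnorm
  refine ⟨Φ.symm (Unitary.linearIsometryEquiv.symm e),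
    Unitary.map_mem _ (SetLike.coe_mem _), EquivLike.injective Φ ?_⟩
  ext1 x
  rw [map_mul, StarAlgEquiv.apply_symm_apply, mul_apply_eq_comp,
    Unitary.coe_symm_linearIsometryEquiv_apply]
  exact (he x).symm

omit [DecidableEq n] in
theorem eq_of_trace_conjTranspose_mul_eq_one {A B : Matrix n n ℂ} (hA : (Aᴴ * A).trace = 1)
    (hB : (Bᴴ * B).trace = 1) (hAB : (Aᴴ * B).trace = 1) : A = B := by
  have hBA : (Bᴴ * A).trace = 1 := by
    rw [← conjTranspose_conjTranspose A, ← conjTranspose_mul, trace_conjTranspose, hAB, star_one]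
  rw [← sub_eq_zero, ← trace_conjTranspose_mul_self_eq_zero_iff, conjTranspose_sub, sub_mul,
    mul_sub, mul_sub, trace_sub, trace_sub, trace_sub, hA, hB, hAB, hBA]
  ring

theorem commute_diagonal_of_commute_diagonal {R : Type*} [CommRing R] [NoZeroDivisors R]
    {A : Matrix n n R} {μ α : n → R} (hA : Commute A (diagonal μ))
    (hμα : ∀ i j, μ i = μ j → α i = α j) : Commute A (diagonal α) := by
  ext i j
  have hij := congrFun (congrFun hA.eq i) j
  simp only [mul_diagonal, diagonal_mul] at hij ⊢
  rcases eq_or_ne (A i j) 0 with h | h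
  · simp [h]
  · rw [hμα i j (mul_left_cancel₀ h (hij.trans (mul_comm _ _))).symm, mul_comm]

theorem commute_of_forall_eigenvector_diagonal {K : Type*} [Field K] {A G : Matrix n n K}
    {μ : n → K} (hG : ∀ x (c : K), diagonal μ *ᵥ x = c • x → ∃ c' : K, G *ᵥ x = c' • x)
    (hA : Commute A (diagonal μ)) : Commute A G := by
  have hμ (i : n) : diagonal μ *ᵥ Pi.single i 1 = μ i • Pi.single i 1 := by
    ext k
    by_cases hk : k = i <;> simp [mulVec_diagonal, hk]
  choose α hα using fun i => hG (Pi.single i 1) (μ i) (hμ i)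
  obtain rfl : G = diagonal α := by
    ext k i
    have hki := congrFun (hα i) k
    rcases eq_or_ne k i with rfl | hne
    · simpa using hki
    · simpa [hne] using hki
  refine commute_diagonal_of_commute_diagonal hA fun i j hij => ?_
  rcases eq_or_ne i j with rfl | hne
  · rfl
  obtain ⟨γ, hγ⟩ := hG (Pi.single i 1 + Pi.single j 1) (μ i) <| by
    rw [mulVec_add, hμ, hμ, hij, smul_add]
  have hi := congrFun hγ i
  have hj := congrFun hγ j
  simp [mulVec_add, hα, hne, hne.symm] at hi hj
  rw [hi, hj]

theorem commute_mul_mul_conjTranspose_of_forall_eigenvector {U V ρ Ψ : Matrix n n ℂ} {μ : n → ℂ}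
    (hΨ : Ψ ∈ unitaryGroup n ℂ) (hUΨ : U * Ψ = Ψ * diagonal μ) (hV : V ∈ unitaryGroup n ℂ)
    (hUV : ∀ x (c : ℂ), U *ᵥ x = c • x → ∃ c' : ℂ, U *ᵥ (V *ᵥ x) = c' • (V *ᵥ x))
    (hρ : Commute U ρ) : Commute U (V * ρ * Vᴴ) := by
  have hV1 : Vᴴ * V = 1 := mem_unitaryGroup_iff'.mp hV
  have hΨ1 : Ψᴴ * Ψ = 1 := mem_unitaryGroup_iff'.mp hΨ
  have hP : V * Ψ ∈ unitaryGroup n ℂ := mul_mem hV hΨ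
  have hP1 : (V * Ψ)ᴴ * (V * Ψ) = 1 := mem_unitaryGroup_iff'.mp hP
  rw [← Unitary.commute_star_mul_mul_iff hP,
    show star (V * Ψ) * (V * ρ * Vᴴ) * (V * Ψ) = Ψᴴ * ρ * Ψ by
      rw [star_eq_conjTranspose, conjTranspose_mul,
        show Ψᴴ * Vᴴ * (V * ρ * Vᴴ) * (V * Ψ) = Ψᴴ * (Vᴴ * V) * ρ * (Vᴴ * V) * Ψ by noncomm_ring,
        hV1, Matrix.mul_one, Matrix.mul_one]]
  refine (commute_of_forall_eigenvector_diagonal (μ := μ) (fun y c hy => ?_) ?_).symm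
  · have hΨy : U *ᵥ (Ψ *ᵥ y) = c • (Ψ *ᵥ y) := by
      rw [mulVec_mulVec, hUΨ, ← mulVec_mulVec, hy, mulVec_smul]
    obtain ⟨c', hc'⟩ := hUV _ c hΨy
    refine ⟨c', ?_⟩
    calc (star (V * Ψ) * U * (V * Ψ)) *ᵥ y = (V * Ψ)ᴴ *ᵥ (U *ᵥ (V *ᵥ (Ψ *ᵥ y))) := by
          simp only [mulVec_mulVec, Matrix.mul_assoc, star_eq_conjTranspose]
      _ = c' • y := by
          rw [hc', mulVec_smul, mulVec_mulVec, mulVec_mulVec, Matrix.mul_assoc, hP1, one_mulVec]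
  · rw [← Unitary.commute_star_mul_mul_iff hΨ, star_eq_conjTranspose, Matrix.mul_assoc, hUΨ,
      ← Matrix.mul_assoc, hΨ1, Matrix.one_mul] at hρ
    exact hρ.symm

theorem transpose_of_mem_unitaryGroup {ψ : n → n → ℂ}
    (h : ∀ i j, star (ψ i) ⬝ᵥ ψ j = if i = j then 1 else 0) : (of ψ)ᵀ ∈ unitaryGroup n ℂ := by
  rw [mem_unitaryGroup_iff']
  ext i j
  rw [one_apply, ← h i j]
  rfl

theorem mul_transpose_of_eq_mul_diagonal {R : Type*} [CommSemiring R] {A : Matrix n n R}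
    {ψ : n → n → R} {e : n → R} (h : ∀ i, A *ᵥ ψ i = e i • ψ i) :
    A * (of ψ)ᵀ = (of ψ)ᵀ * diagonal e := by
  ext k i
  have hik := congrFun (h i) k
  simp only [mulVec, dotProduct, Pi.smul_apply, smul_eq_mul] at hik
  rw [mul_diagonal, mul_apply]
  simp only [transpose_apply, of_apply, hik, mul_comm]

end Matrix

section PureState

theorem exists_smul_star_dotProduct_self_eq_one {n : Type*} [Fintype n] {x : n → ℂ}
    (hx : x ≠ 0) : ∃ r : ℂ, r ≠ 0 ∧ star (r • x) ⬝ᵥ (r • x) = 1 := by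
  have hpos := dotProduct_star_self_pos_iff.mpr hx
  simp only [star_smul, smul_dotProduct, dotProduct_smul, smul_eq_mul]
  generalize star x ⬝ᵥ x = s at hpos ⊢
  obtain ⟨t, ht, rfl⟩ := RCLike.pos_iff_exists_ofReal.mp hpos
  have hsq : √t ≠ 0 := Real.sqrt_ne_zero'.mpr ht
  refine ⟨((√t)⁻¹ : ℝ), by exact_mod_cast inv_ne_zero hsq, ?_⟩
  rw [RCLike.star_def, Complex.conj_ofReal, ← mul_assoc, ← Complex.ofReal_mul, ← sq, inv_pow,
    Real.sq_sqrt ht.le, Complex.ofReal_inv]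
  exact inv_mul_cancel₀ (Complex.ofReal_ne_zero.mpr ht.ne')

theorem Matrix.mul_vecMulVec_star_mul_conjTranspose {n : Type*} [Fintype n]
    (M : Matrix n n ℂ) (x : n → ℂ) :
    M * vecMulVec x (star x) * Mᴴ = vecMulVec (M *ᵥ x) (star (M *ᵥ x)) := by
  rw [mul_vecMulVec, vecMulVec_mul, star_mulVec]

variable {n : Type*} [Fintype n] [DecidableEq n] {U : Matrix n n ℂ} {x : n → ℂ}

theorem Matrix.star_mulVec_dotProduct_mulVec_of_mem_unitaryGroup (hU : U ∈ unitaryGroup n ℂ)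
    (v w : n → ℂ) : star (U *ᵥ v) ⬝ᵥ (U *ᵥ w) = star v ⬝ᵥ w := by
  rw [star_mulVec, ← dotProduct_mulVec, mulVec_mulVec, ← star_eq_conjTranspose,
    mem_unitaryGroup_iff'.mp hU, one_mulVec]

theorem star_mul_self_eq_one_of_mulVec_eq_smul (hU : U ∈ unitaryGroup n ℂ)
    (hx : star x ⬝ᵥ x = 1) {c : ℂ} (h : U *ᵥ x = c • x) : star c * c = 1 := by
  have := star_mulVec_dotProduct_mulVec_of_mem_unitaryGroup hU x x
  rwa [h, star_smul, smul_dotProduct, dotProduct_smul, hx, smul_eq_mul, smul_eq_mul,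
    mul_one] at this

theorem norm_star_dotProduct_mulVec_eq_one_iff (hU : U ∈ unitaryGroup n ℂ)
    (hx : star x ⬝ᵥ x = 1) : ‖star x ⬝ᵥ (U *ᵥ x)‖ = 1 ↔ ∃ c : ℂ, U *ᵥ x = c • x := by
  constructor
  · intro h
    set c := star x ⬝ᵥ (U *ᵥ x)
    have hc : star c * c = 1 := by
      rw [RCLike.star_def, RCLike.conj_mul, h]; norm_num
    refine ⟨c, sub_eq_zero.mp (dotProduct_star_self_eq_zero.mp ?_)⟩
    have hUx : star (U *ᵥ x) ⬝ᵥ x = star c := star_dotProduct _ _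
    simp only [star_sub, sub_dotProduct, dotProduct_sub, star_smul, smul_dotProduct,
      dotProduct_smul, star_mulVec_dotProduct_mulVec_of_mem_unitaryGroup hU, hx, hUx, smul_eq_mul]
    linear_combination (mul_comm c (star c)) - hc
  · rintro ⟨c, hc⟩
    have h1 := congrArg norm (star_mul_self_eq_one_of_mulVec_eq_smul hU hx hc)
    rw [norm_mul, norm_star, norm_one, ← sq] at h1
    rw [hc, dotProduct_smul, hx, smul_eq_mul, mul_one]
    exact (pow_eq_one_iff_of_nonneg (norm_nonneg c) two_ne_zero).mp h1

theorem mul_vecMulVec_star_mul_conjTranspose_eq_self_iff (hU : U ∈ unitaryGroup n ℂ)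
    (hx : star x ⬝ᵥ x = 1) :
    U * vecMulVec x (star x) * Uᴴ = vecMulVec x (star x) ↔ ∃ c : ℂ, U *ᵥ x = c • x := by
  rw [mul_vecMulVec_star_mul_conjTranspose]
  constructor
  · intro h
    refine ⟨star x ⬝ᵥ (U *ᵥ x), ?_⟩
    have := congrArg (· *ᵥ (U *ᵥ x)) h
    rwa [vecMulVec_mulVec, vecMulVec_mulVec, op_smul_eq_smul, op_smul_eq_smul,
      star_mulVec_dotProduct_mulVec_of_mem_unitaryGroup hU, hx, one_smul] at this
  · rintro ⟨c, hc⟩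
    rw [hc, star_smul, smul_vecMulVec, vecMulVec_smul, smul_smul, mul_comm,
      star_mul_self_eq_one_of_mulVec_eq_smul hU hx hc, one_smul]

end PureState

section PsdSqrt

variable {d : ℕ} {M : Matrix (Fin d) (Fin d) ℂ}

open scoped MatrixOrder

theorem psdSqrt_eq_sqrt (hM : M.PosSemidef) : psdSqrt M = CFC.sqrt M := by
  rw [CFC.sqrt_eq_real_sqrt M hM.nonneg, cfcₙ_eq_cfc (hf0 := Real.sqrt_zero), hM.1.cfc_eq,
    IsHermitian.cfc, Unitary.conjStarAlgAut_apply, psdSqrt, dif_pos hM]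
  rfl

theorem posSemidef_psdSqrt (hM : M.PosSemidef) : (psdSqrt M).PosSemidef := by
  rw [psdSqrt_eq_sqrt hM]
  exact (CFC.sqrt_nonneg M).posSemidef

theorem psdSqrt_mul_self (hM : M.PosSemidef) : psdSqrt M * psdSqrt M = M := by
  rw [psdSqrt_eq_sqrt hM]
  exact CFC.sqrt_mul_sqrt_self M hM.nonneg

theorem psdSqrt_eq_of_mul_self_eq {R : Matrix (Fin d) (Fin d) ℂ} (hR : R.PosSemidef)
    (hRM : R * R = M) : psdSqrt M = R := by
  have hM : M.PosSemidef := by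
    rw [← hRM, ← congrArg (· * R) hR.1.eq]
    exact posSemidef_conjTranspose_mul_self R
  rw [psdSqrt_eq_sqrt hM]
  exact CFC.sqrt_unique hRM hR.nonneg

end PsdSqrt

theorem trace_psdSqrt_conj_eq_one_iff {d : ℕ} {U ρ : Matrix (Fin d) (Fin d) ℂ}
    (hU : U ∈ unitaryGroup (Fin d) ℂ) (hρ : ρ.PosSemidef) (htr : ρ.trace = 1) :
    (psdSqrt (psdSqrt ρ * (U * ρ * Uᴴ) * psdSqrt ρ)).trace = 1 ↔ U * ρ * Uᴴ = ρ := by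
  have hU2 : U * Uᴴ = 1 := mem_unitaryGroup_iff.mp hU
  set s := psdSqrt ρ
  have hss : s * s = ρ := psdSqrt_mul_self hρ
  have hsH : sᴴ = s := (posSemidef_psdSqrt hρ).1.eq
  constructor
  · intro h
    have hM : (s * (U * ρ * Uᴴ) * s).PosSemidef := by
      have := (hρ.mul_mul_conjTranspose_same U).mul_mul_conjTranspose_same s
      rwa [hsH] at this
    have hCP : (s * Uᴴ * s)ᴴ * (s * Uᴴ * s) =
        (psdSqrt (s * (U * ρ * Uᴴ) * s))ᴴ * psdSqrt (s * (U * ρ * Uᴴ) * s) := by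
      rw [(posSemidef_psdSqrt hM).1.eq, psdSqrt_mul_self hM, ← hss]
      simp only [conjTranspose_mul, hsH, conjTranspose_conjTranspose]
      noncomm_ring
    obtain ⟨W, hW, hCW⟩ := exists_mem_unitaryGroup_eq_mul_of_conjTranspose_mul_self_eq hCP
    have hW1 : Wᴴ * W = 1 := mem_unitaryGroup_iff'.mp hW
    have hW2 : W * Wᴴ = 1 := mem_unitaryGroup_iff.mp hW
    have hsW : s * W = Uᴴ * s := by
      apply eq_of_trace_conjTranspose_mul_eq_one
      · rw [conjTranspose_mul, hsH, show Wᴴ * s * (s * W) = Wᴴ * (ρ * W) by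
          rw [← hss]; noncomm_ring, trace_mul_comm, Matrix.mul_assoc, hW2, Matrix.mul_one, htr]
      · rw [conjTranspose_mul, conjTranspose_conjTranspose, hsH,
          show s * U * (Uᴴ * s) = s * (U * Uᴴ) * s by noncomm_ring, hU2, Matrix.mul_one, hss, htr]
      · rw [conjTranspose_mul, hsH, show Wᴴ * s * (Uᴴ * s) = Wᴴ * (s * Uᴴ * s) by noncomm_ring,
          hCW, ← Matrix.mul_assoc, hW1, Matrix.one_mul, h]
    have hρU : Uᴴ * ρ * U = ρ := calc
      Uᴴ * ρ * U = (Uᴴ * s) * (Uᴴ * s)ᴴ := by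
        rw [conjTranspose_mul, conjTranspose_conjTranspose, hsH, ← hss]; noncomm_ring
      _ = (s * W) * (s * W)ᴴ := by rw [hsW]
      _ = ρ := by
        rw [conjTranspose_mul, hsH, show s * W * (Wᴴ * s) = s * (W * Wᴴ) * s by noncomm_ring,
          hW2, Matrix.mul_one, hss]
    calc U * ρ * Uᴴ = (U * Uᴴ) * ρ * (U * Uᴴ) := by nth_rw 1 [← hρU]; noncomm_ring
      _ = ρ := by rw [hU2, Matrix.one_mul, Matrix.mul_one]
  · intro h
    rw [h, show s * ρ * s = ρ * ρ by rw [← hss]; noncomm_ring, psdSqrt_eq_of_mul_self_eq hρ rfl,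
      htr]

section Revival

variable {d : ℕ} {H : Matrix (Fin d) (Fin d) ℂ} {T : ℕ}

theorem Uevol_mem_unitaryGroup (hH : H.IsHermitian) (t : ℝ) :
    Uevol H t ∈ unitaryGroup (Fin d) ℂ := by
  have hskew : ((-(I * t)) • H)ᴴ = -((-(I * t)) • H) := by
    rw [conjTranspose_smul, hH.eq, ← neg_smul]
    simp
  rw [mem_unitaryGroup_iff', star_eq_conjTranspose, Uevol, ← Matrix.exp_conjTranspose, hskew,
    ← Matrix.exp_add_of_commute _ _ (Commute.refl ((-(I * t)) • H)).neg_left, neg_add_cancel,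
    NormedSpace.exp_zero]

theorem Uevol_mul_eq_mul_diagonal {Ψ : Matrix (Fin d) (Fin d) ℂ} {e : Fin d → ℂ}
    (h : H * Ψ = Ψ * diagonal e) (t : ℝ) :
    Uevol H t * Ψ = Ψ * diagonal (fun i => Complex.exp (-(I * t) * e i)) := by
  have hsemi : SemiconjBy Ψ ((-(I * t)) • diagonal e) ((-(I * t)) • H) := by
    rw [SemiconjBy, Matrix.mul_smul, Matrix.smul_mul, h]
  have hexp : Ψ * NormedSpace.exp ((-(I * t)) • diagonal e) = Uevol H t * Ψ :=
    open scoped Matrix.Norms.Operator in hsemi.exp_right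
  rw [← hexp, ← diagonal_smul, Matrix.exp_diagonal]
  congr 2
  ext i
  simp [Complex.exp_eq_exp_ℂ]

theorem isFreeState_iff (hH : H.IsHermitian) (x : Fin d → ℂ) :
    IsFreeState H T x ↔
      star x ⬝ᵥ x = 1 ∧ ∃ c : ℂ, Uevol H (2 * Real.pi * T) *ᵥ x = c • x :=
  and_congr_right fun hx => norm_star_dotProduct_mulVec_eq_one_iff (Uevol_mem_unitaryGroup hH _) hx

theorem isFreeDM_iff (hH : H.IsHermitian) (ρ : Matrix (Fin d) (Fin d) ℂ) :
    IsFreeDM H T ρ ↔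
      ρ.PosSemidef ∧ ρ.trace = 1 ∧ Commute (Uevol H (2 * Real.pi * T)) ρ := by
  have hU := Uevol_mem_unitaryGroup hH (2 * Real.pi * T)
  exact and_congr_right fun hρ => and_congr_right fun htr =>
    (trace_psdSqrt_conj_eq_one_iff hU hρ htr).trans
      (commute_unitary_iff_star_right_conjugate hU).symm

theorem isFreeDM_vecMulVec_iff (hH : H.IsHermitian) {x : Fin d → ℂ} (hx : star x ⬝ᵥ x = 1) :
    IsFreeDM H T (vecMulVec x (star x)) ↔ IsFreeState H T x := by
  have hU := Uevol_mem_unitaryGroup hH (2 * Real.pi * T)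
  rw [isFreeDM_iff hH, isFreeState_iff hH, commute_unitary_iff_star_right_conjugate hU]
  exact ⟨fun h => ⟨hx, (mul_vecMulVec_star_mul_conjTranspose_eq_self_iff hU hx).1 h.2.2⟩,
    fun h => ⟨posSemidef_vecMulVec_self_star x, by rw [trace_vecMulVec, dotProduct_comm, hx],
      (mul_vecMulVec_star_mul_conjTranspose_eq_self_iff hU hx).2 h.2⟩⟩

theorem IsFreeUnitary.exists_mulVec_mulVec_eq_smul (hH : H.IsHermitian)
    {V : Matrix (Fin d) (Fin d) ℂ} (hV : IsFreeUnitary H T V) {x : Fin d → ℂ} {c : ℂ}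
    (h : Uevol H (2 * Real.pi * T) *ᵥ x = c • x) :
    ∃ c' : ℂ, Uevol H (2 * Real.pi * T) *ᵥ (V *ᵥ x) = c' • (V *ᵥ x) := by
  rcases eq_or_ne x 0 with rfl | hx
  · exact ⟨0, by simp⟩
  obtain ⟨r, hr, hrx⟩ := exists_smul_star_dotProduct_self_eq_one hx
  have hfree : IsFreeState H T (r • x) :=
    (isFreeState_iff hH _).2 ⟨hrx, c, by rw [mulVec_smul, h, smul_comm]⟩
  obtain ⟨-, c', hc'⟩ := (isFreeState_iff hH _).1 (hV.2 _ hfree)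
  refine ⟨c', smul_right_injective _ hr ?_⟩
  simpa only [mulVec_smul, smul_comm r] using hc'

end Revival

theorem free_unitaries_are_exactly_density_matrix_preserving_general
    (d : ℕ)
    (H : Matrix (Fin d) (Fin d) ℂ) (hH : H.IsHermitian)
    (ψ : Fin d → Fin d → ℂ) (E : Fin d → ℝ)
    (horth : ∀ i j : Fin d, star (ψ i) ⬝ᵥ ψ j = if i = j then 1 else 0)
    (heig : ∀ i : Fin d, H *ᵥ ψ i = (E i : ℂ) • ψ i)
    (T : ℕ)
    (V : Matrix (Fin d) (Fin d) ℂ) (hV : V ∈ Matrix.unitaryGroup (Fin d) ℂ) :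
    (∀ ρ : Matrix (Fin d) (Fin d) ℂ, IsFreeDM H T ρ → IsFreeDM H T (V * ρ * Vᴴ)) ↔
      IsFreeUnitary H T V := by
  constructor
  · refine fun hpres => ⟨hV, fun x hx => ?_⟩
    have hVx : star (V *ᵥ x) ⬝ᵥ (V *ᵥ x) = 1 := by
      rw [star_mulVec_dotProduct_mulVec_of_mem_unitaryGroup hV, hx.1]
    rw [← isFreeDM_vecMulVec_iff hH hVx, ← mul_vecMulVec_star_mul_conjTranspose]
    exact hpres _ ((isFreeDM_vecMulVec_iff hH hx.1).2 hx)
  · intro hfree ρ hρ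
    obtain ⟨hpsd, htr, hcomm⟩ := (isFreeDM_iff hH ρ).1 hρ
    have hΨ := transpose_of_mem_unitaryGroup horth
    have hUΨ := Uevol_mul_eq_mul_diagonal (mul_transpose_of_eq_mul_diagonal heig) (2 * Real.pi * T)
    refine (isFreeDM_iff hH _).2 ⟨hpsd.mul_mul_conjTranspose_same V, ?_,
      commute_mul_mul_conjTranspose_of_forall_eigenvector hΨ hUΨ hV
        (fun _ _ h => hfree.exists_mulVec_mulVec_eq_smul hH h) hcomm⟩
    rw [trace_mul_cycle, ← star_eq_conjTranspose, mem_unitaryGroup_iff'.mp hV, Matrix.one_mul, htr]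

theorem free_unitaries_are_exactly_density_matrix_preserving
    (d : ℕ) (hd : 2 ≤ d)
    (H : Matrix (Fin d) (Fin d) ℂ) (hH : H.IsHermitian)
    (ψ : Fin d → Fin d → ℂ) (E : Fin d → ℝ)
    (horth : ∀ i j : Fin d, star (ψ i) ⬝ᵥ ψ j = if i = j then 1 else 0)
    (heig : ∀ i : Fin d, H *ᵥ ψ i = (E i : ℂ) • ψ i)
    (T : ℕ) (hT : 0 < T)
    (A B : Finset (Fin d))
    (hdisj : Disjoint A B) (hcover : A ∪ B = Finset.univ)
    (hArat : ∀ i ∈ A, ∃ m : ℤ, E i * (T : ℝ) = (m : ℝ))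
    (hBirr : ∀ i ∈ B, Irrational (E i))
    (hBdiff : ∀ i ∈ B, ∀ j ∈ B, i ≠ j → Irrational (E i - E j))
    (hAcard : 1 < A.card) (hBcard : 1 < B.card)
    (V : Matrix (Fin d) (Fin d) ℂ) (hV : V ∈ Matrix.unitaryGroup (Fin d) ℂ) :
    (∀ ρ : Matrix (Fin d) (Fin d) ℂ, IsFreeDM H T ρ → IsFreeDM H T (V * ρ * Vᴴ)) ↔
      IsFreeUnitary H T V :=
  free_unitaries_are_exactly_density_matrix_preserving_general d H hH ψ E horth heig T V hV
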